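/- arXiv:2010.15811 — 2 statements merged into one kernel-verified Lean document; each statement's English description precedes it below -/
import Mathlib

section
/- Let γ ∈ SF⁺ with q̄ = q̄(γ). There exists a constant C > 0 depending only on κ and q̄ such that for all (t,x) ∈ [0,q̄] × ℝ one has −(3/2)·(κ−x)²/(1−q̄) − C ≤ Φ_γ(t,x) ≤ 0, and the same constant C works simultaneously for every γ ∈ SF⁺ with q̄(γ) = q̄. (Part of Proposition 4.1, Eq. (4.7).) -/
/-!
Nonpositivity: `log 𝒩 ≤ 0`, and both kinds of Cole–Hopf step (a log-Laplace transform with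
`m > 0`, a plain expectation with `m = 0`) of a Gaussian shift preserve nonpositivity.

Lower bound: `𝒩(v)` is at least the length of `[v, v + 1]` times the Gaussian density at
`|v| + 1`, so `log 𝒩(v) ≥ -(v² + C₀)` with `C₀ = 1 + log √(2π)`, which gives
`Φ_γ(t, x) ≥ -(κ - x)²/(1 - q̄) - C₀` on `[q̄, 1)`. By Jensen, each Cole–Hopf step dominates
the plain Gaussian expectation, and a Gaussian shift of variance `s` turns a bound
`-(a (κ - y)² + b)` into `-(a ((κ - x)² + s) + b)`. The variances add up to `q̄ - t`, so
`Φ_γ(t, x) ≥ -((κ - x)² + q̄ - t)/(1 - q̄) - C₀`, a bound that only sees `q̄`.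
-/

open MeasureTheory ProbabilityTheory

/-- The standard Gaussian measure on `ℝ`. -/
noncomputable def stdGauss : Measure ℝ := gaussianReal 0 1

/-- The Gaussian tail function `𝒩(v) = P(Z ≥ v)`. -/
noncomputable def gaussTail (v : ℝ) : ℝ := (stdGauss (Set.Ici v)).toReal

/-- A functional order parameter in `SF⁺`: a non-decreasing step function
`γ = Σ_{i=0}^n m_i · 1_{[q_i, q_{i+1})}` with `0 = q_0 < q_1 < ⋯ < q_{n+1} = 1` and
`0 = m_0 ≤ m_1 ≤ ⋯ ≤ m_n = 1`. -/
structure StepFn where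
  n : ℕ
  q : ℕ → ℝ
  m : ℕ → ℝ
  q_zero : q 0 = 0
  q_last : q (n + 1) = 1
  q_lt : ∀ i ≤ n, q i < q (i + 1)
  m_zero : m 0 = 0
  m_last : m n = 1
  m_mono : ∀ i < n, m i ≤ m (i + 1)

namespace StepFn

/-- The right end `q̄(γ) = q_n` of the support of `γ`. -/
noncomputable def qbar (γ : StepFn) : ℝ := γ.q γ.n

open Classical in
/-- `γ` as a function: `γ(s) = m_i` for `s ∈ [q_i, q_{i+1})`, and `0` outside `[0,1)`. -/
noncomputable def toFun (γ : StepFn) (s : ℝ) : ℝ :=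
  if s ∈ Set.Ico (0 : ℝ) 1 then γ.m (Nat.findGreatest (fun i => γ.q i ≤ s) γ.n) else 0

end StepFn

/-- One Cole–Hopf step: given a boundary value `g` at the right end of an interval,
spread `s` and parameter `m`, produce the value at distance `s` from the right end. -/
noncomputable def coleHopf (m s : ℝ) (g : ℝ → ℝ) (x : ℝ) : ℝ :=
  if 0 < m then (1 / m) * Real.log (∫ z, Real.exp (m * g (x + Real.sqrt s * z)) ∂stdGauss)
  else ∫ z, g (x + Real.sqrt s * z) ∂stdGauss

namespace StepFn

/-- `PhiAux γ κ j` is the solution `Φ_γ` on the interval `[q_{n-j}, q_{n-j+1})`,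
built recursively downward from the terminal condition on `[q_n, 1)`. -/
noncomputable def PhiAux (γ : StepFn) (κ : ℝ) : ℕ → ℝ → ℝ → ℝ
  | 0 => fun t x => Real.log (gaussTail ((κ - x) / Real.sqrt (1 - t)))
  | j + 1 => fun t x =>
      coleHopf (γ.m (γ.n - (j + 1))) (γ.q (γ.n - j) - t) (γ.PhiAux κ j (γ.q (γ.n - j))) x

open Classical in
/-- The solution `Φ_γ(t,x)` of the Parisi PDE for the step function `γ`:
for `t ∈ [q_i, q_{i+1})` it is given by `PhiAux γ κ (n - i)`. -/
noncomputable def Phi (γ : StepFn) (κ : ℝ) (t x : ℝ) : ℝ :=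
  γ.PhiAux κ (γ.n - Nat.findGreatest (fun i => γ.q i ≤ t) γ.n) t x

end StepFn

open Real
open scoped NNReal

instance : IsProbabilityMeasure stdGauss := by
  unfold stdGauss; infer_instance

lemma memLp_id_stdGauss (p : ℝ≥0) : MemLp (fun z => z) p stdGauss := memLp_id_gaussianReal p

lemma integral_id_stdGauss : ∫ z, z ∂stdGauss = 0 := integral_id_gaussianReal

lemma integral_sq_stdGauss : ∫ z, z ^ 2 ∂stdGauss = 1 := by
  have h := variance_fun_id_gaussianReal (μ := 0) (v := 1)
  rw [variance_eq_integral aemeasurable_id'] at h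
  simpa [stdGauss, integral_id_gaussianReal] using h

lemma integrable_sub_mul_sq_stdGauss (c d : ℝ) :
    Integrable (fun z => (c - d * z) ^ 2) stdGauss :=
  ((memLp_const c).sub ((memLp_id_stdGauss 2).const_mul d)).integrable_sq

lemma integral_sub_mul_sq_stdGauss (c d : ℝ) :
    ∫ z, (c - d * z) ^ 2 ∂stdGauss = c ^ 2 + d ^ 2 := by
  have h1 := ((memLp_id_stdGauss 1).integrable le_rfl).const_mul (2 * c * d)
  have h2 := (memLp_id_stdGauss 2).integrable_sq.const_mul (d ^ 2)
  have h0 : Integrable (fun z => c ^ 2 - 2 * c * d * z) stdGauss := (integrable_const _).sub h1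
  have hexp : (fun z => (c - d * z) ^ 2) = fun z => (c ^ 2 - 2 * c * d * z) + d ^ 2 * z ^ 2 := by
    ext z; ring
  rw [hexp, integral_add h0 h2, integral_sub (integrable_const _) h1,
    integral_const_mul, integral_const_mul, integral_id_stdGauss, integral_sq_stdGauss]
  simp

lemma gaussianPDFReal_zero_one (x : ℝ) :
    gaussianPDFReal 0 1 x = (√(2 * π))⁻¹ * exp (-(x ^ 2) / 2) := by
  simp [gaussianPDFReal]

lemma gaussTail_le_one (v : ℝ) : gaussTail v ≤ 1 :=
  ENNReal.toReal_le_of_le_ofReal zero_le_one (by simpa using prob_le_one)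

lemma gaussTail_antitone : Antitone gaussTail := fun _ _ hvw =>
  ENNReal.toReal_mono (measure_ne_top _ _) (measure_mono (Set.Ici_subset_Ici.2 hvw))

lemma gaussianPDFReal_le_gaussTail (v : ℝ) : gaussianPDFReal 0 1 (|v| + 1) ≤ gaussTail v := by
  have hpdf : ∀ x ∈ Set.Icc v (v + 1),
      gaussianPDFReal 0 1 (|v| + 1) ≤ gaussianPDFReal 0 1 x := by
    intro x hx
    have hx' : |x| ≤ |v| + 1 :=
      abs_le.2 ⟨by linarith [neg_abs_le v, hx.1], by linarith [le_abs_self v, hx.2]⟩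
    rw [gaussianPDFReal_zero_one, gaussianPDFReal_zero_one]
    gcongr _ * exp (-?_ / 2)
    rw [← sq_abs x]
    gcongr
  have hint := integrable_gaussianPDFReal 0 1
  calc gaussianPDFReal 0 1 (|v| + 1)
      = ∫ _ in Set.Icc v (v + 1), gaussianPDFReal 0 1 (|v| + 1) := by simp
    _ ≤ ∫ x in Set.Icc v (v + 1), gaussianPDFReal 0 1 x :=
        setIntegral_mono_on (integrableOn_const (by simp)) hint.integrableOn measurableSet_Icc hpdf
    _ ≤ ∫ x in Set.Ici v, gaussianPDFReal 0 1 x :=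
        setIntegral_mono_set hint.integrableOn (.of_forall fun x => gaussianPDFReal_nonneg 0 1 x)
          (.of_forall fun _ hx => hx.1)
    _ = gaussTail v := by
        rw [gaussTail, stdGauss, gaussianReal_apply_eq_integral 0 one_ne_zero, ENNReal.toReal_ofReal
          (setIntegral_nonneg measurableSet_Ici fun x _ => gaussianPDFReal_nonneg 0 1 x)]

noncomputable def tailConst : ℝ := 1 + log √(2 * π)

lemma tailConst_pos : 0 < tailConst := by
  have : 0 ≤ log √(2 * π) :=
    log_nonneg (one_le_sqrt.2 (by nlinarith [pi_gt_three]))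
  unfold tailConst; linarith

lemma neg_sq_add_tailConst_le_log_gaussTail (v : ℝ) :
    -(v ^ 2 + tailConst) ≤ log (gaussTail v) := by
  have hpos : 0 < gaussianPDFReal 0 1 (|v| + 1) := gaussianPDFReal_pos 0 1 _ one_ne_zero
  have hlog := log_le_log hpos (gaussianPDFReal_le_gaussTail v)
  rw [gaussianPDFReal_zero_one, log_mul (by positivity) (exp_ne_zero _), log_exp, log_inv] at hlog
  have : (|v| + 1) ^ 2 / 2 ≤ v ^ 2 + 1 := by nlinarith [sq_abs v, sq_nonneg (|v| - 1)]
  unfold tailConst; linarith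

section ColeHopf

variable {m s : ℝ} {g : ℝ → ℝ}

lemma coleHopf_nonpos (hg : ∀ y, g y ≤ 0) (x : ℝ) : coleHopf m s g x ≤ 0 := by
  unfold coleHopf
  split_ifs with hm
  · have hle : ∫ z, exp (m * g (x + √s * z)) ∂stdGauss ≤ 1 := by
      refine (le_abs_self _).trans ?_
      simpa using norm_integral_le_of_norm_le_const (μ := stdGauss) (C := 1)
        (f := fun z => exp (m * g (x + √s * z))) (.of_forall fun z => by
        rw [norm_of_nonneg (exp_pos _).le]
        exact exp_le_one_iff.2 (mul_nonpos_of_nonneg_of_nonpos hm.le (hg _)))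
    exact mul_nonpos_of_nonneg_of_nonpos (by positivity)
      (log_nonpos (integral_nonneg fun _ => (exp_pos _).le) hle)
  · exact integral_nonpos fun _ => hg _

lemma measurable_coleHopf (hg : Measurable g) : Measurable (coleHopf m s g) := by
  have hshift : Measurable fun p : ℝ × ℝ => g (p.1 + √s * p.2) := by fun_prop
  unfold coleHopf
  split_ifs
  · exact ((hshift.const_mul m).exp.stronglyMeasurable.integral_prod_right').measurable.log
      |>.const_mul _
  · exact hshift.stronglyMeasurable.integral_prod_right'.measurable

lemma integral_le_coleHopf (hg : ∀ y, g y ≤ 0) {x : ℝ}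
    (hint : Integrable (fun z => g (x + √s * z)) stdGauss) :
    ∫ z, g (x + √s * z) ∂stdGauss ≤ coleHopf m s g x := by
  unfold coleHopf
  split_ifs with hm
  · have hexp_int : Integrable (fun z => exp (m * g (x + √s * z))) stdGauss := by
      refine (integrable_const (1 : ℝ)).mono'
        (continuous_exp.comp_aestronglyMeasurable (hint.const_mul m).aestronglyMeasurable)
        (.of_forall fun z => ?_)
      rw [norm_of_nonneg (exp_pos _).le]
      exact exp_le_one_iff.2 (mul_nonpos_of_nonneg_of_nonpos hm.le (hg _))
    have hjensen : exp (∫ z, m * g (x + √s * z) ∂stdGauss)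
        ≤ ∫ z, exp (m * g (x + √s * z)) ∂stdGauss := by
      simpa using convexOn_exp.map_integral_le continuous_exp.continuousOn isClosed_univ
        (.of_forall fun _ => Set.mem_univ _) (hint.const_mul m) hexp_int
    have hlog := log_le_log (exp_pos _) hjensen
    rw [log_exp, integral_const_mul] at hlog
    rwa [one_div, le_inv_mul_iff₀ hm]
  · exact le_rfl

lemma neg_sq_le_coleHopf {κ a b : ℝ} (hs : 0 ≤ s) (hg_meas : Measurable g)
    (hg_nonpos : ∀ y, g y ≤ 0) (hg : ∀ y, -(a * (κ - y) ^ 2 + b) ≤ g y) (x : ℝ) :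
    -(a * ((κ - x) ^ 2 + s) + b) ≤ coleHopf m s g x := by
  have hlower : ∀ z, -(a * ((κ - x) - √s * z) ^ 2 + b) ≤ g (x + √s * z) := fun z => by
    simpa only [sub_sub] using hg (x + √s * z)
  have hquad : Integrable (fun z => a * ((κ - x) - √s * z) ^ 2 + b) stdGauss :=
    ((integrable_sub_mul_sq_stdGauss _ _).const_mul a).add (integrable_const b)
  have hint : Integrable (fun z => g (x + √s * z)) stdGauss := by
    refine hquad.mono' (hg_meas.comp (by fun_prop)).aestronglyMeasurable (.of_forall fun z => ?_)
    rw [norm_eq_abs, abs_le]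
    constructor <;> linarith [hlower z, hg_nonpos (x + √s * z)]
  calc -(a * ((κ - x) ^ 2 + s) + b)
      = ∫ z, -(a * ((κ - x) - √s * z) ^ 2 + b) ∂stdGauss := by
        rw [integral_neg, integral_add ((integrable_sub_mul_sq_stdGauss _ _).const_mul a)
          (integrable_const b), integral_const_mul, integral_sub_mul_sq_stdGauss, sq_sqrt hs]
        simp
    _ ≤ ∫ z, g (x + √s * z) ∂stdGauss := integral_mono hquad.neg hint hlower
    _ ≤ coleHopf m s g x := integral_le_coleHopf hg_nonpos hint

end ColeHopf

namespace StepFn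

variable (γ : StepFn) (κ : ℝ)

lemma q_mono {i j : ℕ} (hij : i ≤ j) (hj : j ≤ γ.n + 1) : γ.q i ≤ γ.q j := by
  induction j, hij using Nat.le_induction with
  | base => exact le_rfl
  | succ j hij ih => exact (ih (by omega)).trans (γ.q_lt j (by omega)).le

lemma qbar_nonneg : 0 ≤ γ.qbar := γ.q_zero ▸ γ.q_mono (Nat.zero_le _) (Nat.le_succ _)

lemma qbar_lt_one : γ.qbar < 1 := γ.q_last ▸ γ.q_lt γ.n le_rfl

lemma le_q_findGreatest_succ {t : ℝ} (ht : t ≤ γ.qbar) :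
    t ≤ γ.q (Nat.findGreatest (fun i => γ.q i ≤ t) γ.n + 1) := by
  rcases (Nat.findGreatest_le (P := fun i => γ.q i ≤ t) γ.n).lt_or_eq with hlt | heq
  · exact (not_le.1 <|
      Nat.findGreatest_is_greatest (P := fun i => γ.q i ≤ t) (Nat.lt_succ_self _) hlt).le
  · rw [heq, γ.q_last]
    exact ht.trans γ.qbar_lt_one.le

lemma measurable_PhiAux (j : ℕ) (t : ℝ) : Measurable (γ.PhiAux κ j t) := by
  induction j generalizing t with
  | zero => exact (gaussTail_antitone.measurable.comp (by fun_prop)).log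
  | succ j ih => exact measurable_coleHopf (ih _)

lemma PhiAux_nonpos (j : ℕ) (t x : ℝ) : γ.PhiAux κ j t x ≤ 0 := by
  induction j generalizing t x with
  | zero => exact log_nonpos ENNReal.toReal_nonneg (gaussTail_le_one _)
  | succ j ih => exact coleHopf_nonpos (ih _) x

lemma le_PhiAux (j : ℕ) {t : ℝ} (ht : t ≤ γ.qbar) (ht' : t ≤ γ.q (γ.n + 1 - j))
    (x : ℝ) :
    -((1 - γ.qbar)⁻¹ * ((κ - x) ^ 2 + (γ.qbar - t)) + tailConst) ≤ γ.PhiAux κ j t x := by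
  have hq : 0 < 1 - γ.qbar := sub_pos.2 γ.qbar_lt_one
  induction j generalizing t x with
  | zero =>
    have hsq : ((κ - x) / √(1 - t)) ^ 2 = (κ - x) ^ 2 / (1 - t) := by
      rw [div_pow, sq_sqrt (by linarith)]
    have hle : (κ - x) ^ 2 / (1 - t) ≤ (1 - γ.qbar)⁻¹ * ((κ - x) ^ 2 + (γ.qbar - t)) := by
      rw [← div_eq_inv_mul]
      gcongr ?_ / ?_ <;> linarith
    have := neg_sq_add_tailConst_le_log_gaussTail ((κ - x) / √(1 - t))
    rw [hsq] at this
    exact le_trans (by linarith) this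
  | succ j ih =>
    set t' := γ.q (γ.n - j)
    have ht't : t ≤ t' := by simpa [t', Nat.add_sub_add_right] using ht'
    have ht'bar : t' ≤ γ.qbar := γ.q_mono (Nat.sub_le _ _) (Nat.le_succ _)
    have hg : ∀ y,
        -((1 - γ.qbar)⁻¹ * (κ - y) ^ 2 + ((1 - γ.qbar)⁻¹ * (γ.qbar - t') + tailConst))
          ≤ γ.PhiAux κ j t' y := fun y => by
      linarith [ih ht'bar (γ.q_mono (by omega) (by omega)) y]
    calc -((1 - γ.qbar)⁻¹ * ((κ - x) ^ 2 + (γ.qbar - t)) + tailConst)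
        = -((1 - γ.qbar)⁻¹ * ((κ - x) ^ 2 + (t' - t)) +
            ((1 - γ.qbar)⁻¹ * (γ.qbar - t') + tailConst)) := by ring
      _ ≤ γ.PhiAux κ (j + 1) t x := neg_sq_le_coleHopf (sub_nonneg.2 ht't)
        (γ.measurable_PhiAux κ j t') (γ.PhiAux_nonpos κ j t') hg x

lemma Phi_nonpos (t x : ℝ) : γ.Phi κ t x ≤ 0 := γ.PhiAux_nonpos κ _ t x

lemma le_Phi {t : ℝ} (ht : t ≤ γ.qbar) (x : ℝ) :
    -((1 - γ.qbar)⁻¹ * ((κ - x) ^ 2 + (γ.qbar - t)) + tailConst) ≤ γ.Phi κ t x := by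
  have hi := Nat.findGreatest_le (P := fun i => γ.q i ≤ t) γ.n
  refine γ.le_PhiAux κ _ ht ?_ x
  rw [show γ.n + 1 - (γ.n - Nat.findGreatest (fun i => γ.q i ≤ t) γ.n)
    = Nat.findGreatest (fun i => γ.q i ≤ t) γ.n + 1 by omega]
  exact γ.le_q_findGreatest_succ ht

end StepFn

/-- part of Proposition 4.1, Eq. (4.7): for `γ ∈ SF⁺` with `q̄ = q̄(γ)`,
there is a constant `C > 0` depending only on `κ` and `q̄` such that
`−(3/2)(κ−x)²/(1−q̄) − C ≤ Φ_γ(t,x) ≤ 0` for all `(t,x) ∈ [0,q̄] × ℝ`,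
uniformly over all `γ' ∈ SF⁺` with the same `q̄`. -/
theorem statement_0 (κ : ℝ) (γ : StepFn) :
    ∃ C > (0 : ℝ), ∀ γ' : StepFn, γ'.qbar = γ.qbar →
      ∀ t ∈ Set.Icc (0 : ℝ) γ.qbar, ∀ x : ℝ,
        -(3 / 2) * (κ - x) ^ 2 / (1 - γ.qbar) - C ≤ γ'.Phi κ t x ∧ γ'.Phi κ t x ≤ 0 := by
  set a := (1 - γ.qbar)⁻¹
  have ha : 0 < a := inv_pos.2 (sub_pos.2 γ.qbar_lt_one)
  refine ⟨a * γ.qbar + tailConst,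
    add_pos_of_nonneg_of_pos (mul_nonneg ha.le γ.qbar_nonneg) tailConst_pos, ?_⟩
  intro γ' hq t ⟨ht₀, ht⟩ x
  refine ⟨?_, γ'.Phi_nonpos κ t x⟩
  have hlower := γ'.le_Phi κ (hq ▸ ht) x
  rw [hq] at hlower
  have hsq : 0 ≤ a * (κ - x) ^ 2 := by positivity
  have hqt : a * (γ.qbar - t) ≤ a * γ.qbar := by gcongr; linarith
  calc -(3 / 2) * (κ - x) ^ 2 / (1 - γ.qbar) - (a * γ.qbar + tailConst)
      = -(3 / 2 * (a * (κ - x) ^ 2)) - (a * γ.qbar + tailConst) := by ring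
    _ ≤ -(a * ((κ - x) ^ 2 + (γ.qbar - t)) + tailConst) := by linarith
    _ ≤ γ'.Phi κ t x := hlower
end

section
/- Let M, N ≥ 1, let G be a real M×N matrix, let κ < 0, and let u ∈ ℝ^N. Let P = {σ ∈ ℝ^N : (Gσ)_a ≥ κ√N for all 1 ≤ a ≤ M}; note 0 ∈ P so P is a nonempty closed convex set. Suppose s > 0 is such that ‖Gᵀλ‖₂ ≥ s·‖λ‖₂ for every λ ∈ ℝ^M with all entries nonnegative. Then there exists σ* ∈ P (the Euclidean projection of u onto P) satisfying ‖σ* − u‖₂ ≤ (1/s)·‖(κ√N·1 − G u)₊‖₂, where (v)₊ denotes the entrywise positive part of a vector v and 1 is the all-ones vector in ℝ^M. (Deterministic core of Lemma 3.9, via convex duality for the projection problem.) -/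
noncomputable def eNorm {k : ℕ} (v : Fin k → ℝ) : ℝ := Real.sqrt (∑ i, (v i) ^ 2)

lemma eNorm_nonneg' {k : ℕ} (v : Fin k → ℝ) : 0 ≤ eNorm v := Real.sqrt_nonneg _

lemma sq_eNorm {k : ℕ} (v : Fin k → ℝ) : eNorm v ^ 2 = ∑ i, (v i) ^ 2 :=
  Real.sq_sqrt (Finset.sum_nonneg fun _ _ => sq_nonneg _)

lemma dot_le_eNorm {k : ℕ} (v w : Fin k → ℝ) : ∑ i, v i * w i ≤ eNorm v * eNorm w := by
  have h := Finset.sum_mul_sq_le_sq_mul_sq Finset.univ v w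
  have h1 : ∑ i, v i * w i ≤ |∑ i, v i * w i| := le_abs_self _
  have h2 : |∑ i, v i * w i| = Real.sqrt ((∑ i, v i * w i) ^ 2) := (Real.sqrt_sq_eq_abs _).symm
  calc ∑ i, v i * w i ≤ Real.sqrt ((∑ i, v i * w i) ^ 2) := h2 ▸ h1
    _ ≤ Real.sqrt ((∑ i, v i ^ 2) * (∑ i, w i ^ 2)) := Real.sqrt_le_sqrt h
    _ = eNorm v * eNorm w := by
        rw [eNorm, eNorm, ← Real.sqrt_mul (Finset.sum_nonneg fun _ _ => sq_nonneg _)]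

lemma swap_sum {M N : ℕ} (G : Matrix (Fin M) (Fin N) ℝ) (lam : Fin M → ℝ) (x : Fin N → ℝ) :
    ∑ a, lam a * G.mulVec x a = ∑ i, G.transpose.mulVec lam i * x i := by
  simp only [Matrix.mulVec, dotProduct, Matrix.transpose_apply, Finset.mul_sum,
    Finset.sum_mul]
  rw [Finset.sum_comm]
  exact Finset.sum_congr rfl fun i _ => Finset.sum_congr rfl fun a _ => by ring

lemma aux_div (x y W s : ℝ) (hs : 0 < s) (hx : 0 < x) (hW : 0 ≤ W)
    (h2 : s * y ≤ x) (h3 : x ^ 2 ≤ y * W) : x * s ≤ 1 * W := by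
  nlinarith [mul_le_mul_of_nonneg_right h2 hW, mul_le_mul_of_nonneg_left h3 hs.le]

lemma core {M N : ℕ} (G : Matrix (Fin M) (Fin N) ℝ) (bv : Fin M → ℝ) (u : Fin N → ℝ)
    (s : ℝ) (hs : 0 < s)
    (hG : ∀ lam : Fin M → ℝ, (∀ a, 0 ≤ lam a) →
      s * eNorm lam ≤ eNorm (G.transpose.mulVec lam)) :
    ∃ σstar : Fin N → ℝ,
      (∀ a, bv a ≤ G.mulVec σstar a) ∧
      (∀ σ : Fin N → ℝ, (∀ a, bv a ≤ G.mulVec σ a) →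
        eNorm (σstar - u) ≤ eNorm (σ - u)) ∧
      eNorm (σstar - u) ≤
        (1 / s) * eNorm (fun a => max (bv a - G.mulVec u a) 0) := by
  set wp : Fin M → ℝ := fun a => max (bv a - G.mulVec u a) 0 with hwp
  set W : ℝ := eNorm wp with hWdef
  have hW : 0 ≤ W := eNorm_nonneg' _
  set R : ℝ := 2 * W / s ^ 2 + 1 with hR
  have hs2 : 0 < s ^ 2 := pow_pos hs 2
  have hRpos : 0 < R := by positivity
  set K : Set (Fin M → ℝ) := Set.univ.pi fun _ => Set.Icc (0:ℝ) R with hK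
  have hKc : IsCompact K := isCompact_univ_pi fun _ => isCompact_Icc
  have hK0 : (0 : Fin M → ℝ) ∈ K := fun a _ => ⟨le_rfl, hRpos.le⟩
  set f : (Fin M → ℝ) → ℝ :=
    fun lam => (1/2) * ∑ i, (G.transpose.mulVec lam i) ^ 2
      - ∑ a, lam a * (bv a - G.mulVec u a) with hf
  have hfc : Continuous f := by
    apply Continuous.sub
    · apply Continuous.mul continuous_const
      apply continuous_finset_sum
      intro i _
      have : Continuous fun lam : Fin M → ℝ => G.transpose.mulVec lam i := by
        simp only [Matrix.mulVec, dotProduct]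
        exact continuous_finset_sum _ fun a _ => continuous_const.mul (continuous_apply a)
      exact this.pow 2
    · exact continuous_finset_sum _ fun a _ => (continuous_apply a).mul continuous_const
  obtain ⟨lam, hlamK, hmin⟩ := hKc.exists_isMinOn ⟨0, hK0⟩ hfc.continuousOn
  have hmin' : ∀ x ∈ K, f lam ≤ f x := fun x hx => isMinOn_iff.mp hmin x hx
  have hlam0 : ∀ a, 0 ≤ lam a := fun a => (hlamK a (Set.mem_univ a)).1
  have hlamR : ∀ a, lam a ≤ R := fun a => (hlamK a (Set.mem_univ a)).2
  have hf0 : f lam ≤ 0 := by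
    have h := hmin' 0 hK0
    have : f 0 = 0 := by simp [hf, Matrix.mulVec_zero]
    linarith
  -- coercivity bound
  have hdotw : ∑ a, lam a * (bv a - G.mulVec u a) ≤ eNorm lam * W := by
    calc ∑ a, lam a * (bv a - G.mulVec u a) ≤ ∑ a, lam a * wp a := by
          apply Finset.sum_le_sum
          intro a _
          exact mul_le_mul_of_nonneg_left (le_max_left _ _) (hlam0 a)
      _ ≤ eNorm lam * eNorm wp := dot_le_eNorm _ _
      _ = eNorm lam * W := rfl
  have hlow : s ^ 2 * (eNorm lam) ^ 2 ≤ ∑ i, (G.transpose.mulVec lam i) ^ 2 := by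
    have h1 := hG lam hlam0
    calc s ^ 2 * (eNorm lam) ^ 2 = (s * eNorm lam) ^ 2 := by ring
      _ ≤ (eNorm (G.transpose.mulVec lam)) ^ 2 :=
          pow_le_pow_left₀ (mul_nonneg hs.le (eNorm_nonneg' _)) h1 2
      _ = ∑ i, (G.transpose.mulVec lam i) ^ 2 := sq_eNorm _
  have hE : eNorm lam ≤ 2 * W / s ^ 2 := by
    have hEnn := eNorm_nonneg' lam
    rcases eq_or_lt_of_le hEnn with h | h
    · rw [← h]; positivity
    · rw [le_div_iff₀ hs2]
      have hkey : (1/2) * (s ^ 2 * (eNorm lam) ^ 2) ≤ eNorm lam * W := by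
        rw [hf] at hf0
        nlinarith [hlow, hdotw]
      nlinarith [h]
  have hlam_le : ∀ a, lam a ≤ 2 * W / s ^ 2 := by
    intro a
    have h1 : (lam a) ^ 2 ≤ ∑ a', (lam a') ^ 2 :=
      Finset.single_le_sum (f := fun a' => (lam a') ^ 2) (fun _ _ => sq_nonneg _)
        (Finset.mem_univ a)
    have h2 : lam a ≤ eNorm lam := by
      rw [← Real.sqrt_sq (hlam0 a)]
      exact Real.sqrt_le_sqrt h1
    linarith
  -- the candidate projection
  set d : Fin N → ℝ := G.transpose.mulVec lam with hd
  set σstar : Fin N → ℝ := fun i => u i + d i with hσ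
  have hσd : σstar - u = d := by funext i; simp [hσ]
  have hud : σstar = u + d := by funext i; rfl
  have hGσ : ∀ a, G.mulVec σstar a = G.mulVec u a + G.mulVec d a := by
    intro a
    rw [hud, Matrix.mulVec_add]; rfl
  set c : Fin M → ℝ := fun a => G.mulVec σstar a - bv a with hc
  set Q : Fin M → ℝ := fun a => ∑ i, (G a i) ^ 2 with hQ
  have hQ0 : ∀ a, 0 ≤ Q a := fun a => Finset.sum_nonneg fun _ _ => sq_nonneg _
  have hmvd : ∀ a, G.mulVec d a = ∑ i, G a i * d i := by
    intro a; simp [Matrix.mulVec, dotProduct]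
  have hca : ∀ a, c a = (∑ i, G a i * d i) + G.mulVec u a - bv a := by
    intro a
    simp only [hc]
    rw [hGσ a, hmvd a]; ring
  -- quadratic expansion at a perturbation
  have hexp : ∀ (a : Fin M) (t : ℝ),
      f (fun a' => lam a' + t * (if a' = a then 1 else 0))
        = f lam + t * c a + (1/2) * t ^ 2 * Q a := by
    intro a t
    set pert : Fin M → ℝ := fun a' => lam a' + t * (if a' = a then 1 else 0) with hpert
    have h1 : ∀ i, G.transpose.mulVec pert i = d i + t * G a i := by
      intro i
      simp only [Matrix.mulVec, dotProduct, Matrix.transpose_apply, hpert]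
      have e : ∀ a' ∈ Finset.univ, G a' i * (lam a' + t * (if a' = a then (1:ℝ) else 0))
          = G a' i * lam a' + t * (if a' = a then G a' i else 0) := by
        intro a' _
        by_cases h : a' = a <;> simp [h] <;> ring
      rw [Finset.sum_congr rfl e, Finset.sum_add_distrib, ← Finset.mul_sum,
        Finset.sum_ite_eq' Finset.univ a (fun a' => G a' i)]
      simp [hd, Matrix.mulVec, dotProduct, Matrix.transpose_apply]
    have h2 : ∑ i, (G.transpose.mulVec pert i) ^ 2
        = (∑ i, d i ^ 2) + 2 * t * (∑ i, G a i * d i) + t ^ 2 * Q a := by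
      have e : ∀ i ∈ Finset.univ, (G.transpose.mulVec pert i) ^ 2
          = d i ^ 2 + (2 * t) * (G a i * d i) + t ^ 2 * (G a i) ^ 2 := by
        intro i _
        rw [h1 i]; ring
      rw [Finset.sum_congr rfl e, Finset.sum_add_distrib, Finset.sum_add_distrib,
        ← Finset.mul_sum, ← Finset.mul_sum]
    have h3 : ∑ a', pert a' * (bv a' - G.mulVec u a')
        = (∑ a', lam a' * (bv a' - G.mulVec u a')) + t * (bv a - G.mulVec u a) := by
      have e : ∀ a' ∈ Finset.univ, pert a' * (bv a' - G.mulVec u a')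
          = lam a' * (bv a' - G.mulVec u a')
            + t * (if a' = a then bv a' - G.mulVec u a' else 0) := by
        intro a' _
        by_cases h : a' = a <;> simp [hpert, h] <;> ring
      rw [Finset.sum_congr rfl e, Finset.sum_add_distrib, ← Finset.mul_sum,
        Finset.sum_ite_eq' Finset.univ a (fun a' => bv a' - G.mulVec u a')]
      simp
    have hfpert : f pert = (1/2) * ∑ i, (G.transpose.mulVec pert i) ^ 2
        - ∑ a', pert a' * (bv a' - G.mulVec u a') := rfl
    have hflam : f lam = (1/2) * ∑ i, (G.transpose.mulVec lam i) ^ 2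
        - ∑ a', lam a' * (bv a' - G.mulVec u a') := rfl
    have hdlam : ∀ i, G.transpose.mulVec lam i = d i := fun i => rfl
    rw [hfpert, h2, h3, hflam, hca a]
    have : ∑ i, (G.transpose.mulVec lam i) ^ 2 = ∑ i, d i ^ 2 :=
      Finset.sum_congr rfl fun i _ => by rw [hdlam i]
    rw [this]
    ring
  have hmem : ∀ (a : Fin M) (t : ℝ), -lam a ≤ t → t ≤ 1 →
      (fun a' => lam a' + t * (if a' = a then 1 else 0)) ∈ K := by
    intro a t ht1 ht2 a' _
    simp only [Set.mem_Icc]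
    by_cases h : a' = a
    · subst h
      rw [if_pos rfl, mul_one]
      refine ⟨by linarith, ?_⟩
      have := hlam_le a'
      rw [hR]; linarith
    · simp only [if_neg h, mul_zero, add_zero]
      exact ⟨hlam0 a', hlamR a'⟩
  have hquad : ∀ (a : Fin M) (t : ℝ), -lam a ≤ t → t ≤ 1 →
      0 ≤ t * c a + (1/2) * t ^ 2 * Q a := by
    intro a t h1 h2
    have h3 := hmin' _ (hmem a t h1 h2)
    rw [hexp a t] at h3
    linarith
  clear_value wp W R K f d σstar c Q
  clear hmin hmin' hfc hKc hK0 hf0 hexp hmem hE hlam_le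
  have hc0 : ∀ a, 0 ≤ c a := by
    intro a
    by_contra hcon
    push_neg at hcon
    set t : ℝ := min 1 ((-c a) / (Q a + 1)) with ht
    have htpos : 0 < t := lt_min one_pos (div_pos (by linarith) (by linarith [hQ0 a]))
    have h1 := hquad a t (le_trans (by linarith [hlam0 a]) htpos.le) (min_le_left _ _)
    have h2 : t * (Q a + 1) ≤ -c a := by
      rw [← le_div_iff₀ (by linarith [hQ0 a] : (0:ℝ) < Q a + 1)]
      exact min_le_right _ _
    nlinarith [mul_le_mul_of_nonneg_left h2 htpos.le, hQ0 a, mul_pos htpos htpos,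
      mul_pos htpos (neg_pos.2 hcon)]
  have hc_le : ∀ a, 0 < lam a → c a ≤ 0 := by
    intro a hpos
    by_contra hcon
    push_neg at hcon
    set t : ℝ := -min (lam a) (c a / (Q a + 1)) with ht
    have htneg : t < 0 := by
      rw [ht, neg_lt, neg_zero]
      exact lt_min hpos (div_pos hcon (by linarith [hQ0 a]))
    have hmemt : -lam a ≤ t := by
      rw [ht, neg_le_neg_iff]
      exact min_le_left _ _
    have h1 := hquad a t hmemt (by linarith)
    have h2 : -t * (Q a + 1) ≤ c a := by
      rw [← le_div_iff₀ (by linarith [hQ0 a] : (0:ℝ) < Q a + 1), ht, neg_neg]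
      exact min_le_right _ _
    clear_value t
    nlinarith [mul_le_mul_of_nonneg_left h2 (by linarith : (0:ℝ) ≤ -t), hQ0 a, mul_nonneg (mul_pos (neg_pos.2 htneg) (neg_pos.2 htneg)).le (hQ0 a),
      mul_pos (neg_pos.2 htneg) (neg_pos.2 htneg), mul_pos (neg_pos.2 htneg) hcon]
  have hsum_c : ∑ a, lam a * c a ≤ 0 := by
    apply Finset.sum_nonpos
    intro a _
    rcases eq_or_lt_of_le (hlam0 a) with h | h
    · rw [← h, zero_mul]
    · exact mul_nonpos_of_nonneg_of_nonpos h.le (hc_le a h)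
  -- key inequality
  have hkey : ∑ i, d i ^ 2 ≤ ∑ a, lam a * (bv a - G.mulVec u a) := by
    have h1 : ∑ i, d i ^ 2 = ∑ a, lam a * G.mulVec d a := by
      rw [swap_sum]
      exact Finset.sum_congr rfl fun i _ => by rw [← hd]; ring
    have h2 : ∀ a, G.mulVec d a = c a + (bv a - G.mulVec u a) := by
      intro a
      simp only [hc]
      rw [hGσ a]; ring
    rw [h1]
    calc ∑ a, lam a * G.mulVec d a
        = ∑ a, (lam a * c a + lam a * (bv a - G.mulVec u a)) :=
          Finset.sum_congr rfl fun a _ => by rw [h2 a]; ring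
      _ = (∑ a, lam a * c a) + ∑ a, lam a * (bv a - G.mulVec u a) := Finset.sum_add_distrib
      _ ≤ ∑ a, lam a * (bv a - G.mulVec u a) := by linarith [hsum_c]
  have hδsq : eNorm d ^ 2 = ∑ i, d i ^ 2 := sq_eNorm d
  have hδnn : 0 ≤ eNorm d := eNorm_nonneg' d
  refine ⟨σstar, ?_, ?_, ?_⟩
  · intro a
    have h := hc0 a
    simp only [hc] at h
    linarith
  · intro σ hσfeas
    rw [hσd]
    have h1 : ∑ a, lam a * (bv a - G.mulVec u a) ≤ ∑ i, d i * (σ - u) i := by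
      calc ∑ a, lam a * (bv a - G.mulVec u a) ≤ ∑ a, lam a * G.mulVec (σ - u) a := by
            apply Finset.sum_le_sum
            intro a _
            apply mul_le_mul_of_nonneg_left _ (hlam0 a)
            have : G.mulVec (σ - u) a = G.mulVec σ a - G.mulVec u a := by
              rw [Matrix.mulVec_sub]; rfl
            rw [this]
            linarith [hσfeas a]
        _ = ∑ i, d i * (σ - u) i := by
            rw [swap_sum, ← hd]
    have h2 : ∑ i, d i * (σ - u) i ≤ eNorm d * eNorm (σ - u) := dot_le_eNorm _ _
    have h3 : eNorm d ^ 2 ≤ eNorm d * eNorm (σ - u) := by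
      rw [hδsq]; linarith
    rcases eq_or_lt_of_le hδnn with h | h
    · rw [← h]; exact eNorm_nonneg' _
    · nlinarith [h3]
  · rw [hσd]
    have h2 : s * eNorm lam ≤ eNorm d := by rw [hd]; exact hG lam hlam0
    have h3 : eNorm d ^ 2 ≤ eNorm lam * W := by
      rw [hδsq]; linarith [hkey, hdotw]
    rcases eq_or_lt_of_le hδnn with h | h
    · rw [← h]
      exact mul_nonneg (by positivity) hW
    · rw [div_mul_eq_mul_div, le_div_iff₀ hs]
      exact aux_div (eNorm d) (eNorm lam) W s hs h hW h2 h3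

/-- deterministic core of Lemma 3.9: let `G` be an `M×N` real matrix,
`κ < 0`, `u ∈ ℝ^N`, and let `P = {σ : Gσ ≥ κ√N·1}` (entrywise).  If `s > 0` satisfies
`‖Gᵀλ‖₂ ≥ s‖λ‖₂` for every entrywise-nonnegative `λ ∈ ℝ^M`, then the Euclidean projection
`σ*` of `u` onto `P` exists and satisfies `‖σ* − u‖₂ ≤ (1/s)·‖(κ√N·1 − Gu)₊‖₂`. -/
theorem statement_11 (M N : ℕ) (hM : 1 ≤ M) (hN : 1 ≤ N)
    (G : Matrix (Fin M) (Fin N) ℝ) (κ : ℝ) (hκ : κ < 0) (u : Fin N → ℝ)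
    (s : ℝ) (hs : 0 < s)
    (hG : ∀ lam : Fin M → ℝ, (∀ a, 0 ≤ lam a) →
      s * eNorm lam ≤ eNorm (G.transpose.mulVec lam)) :
    ∃ σstar : Fin N → ℝ,
      (∀ a, κ * Real.sqrt N ≤ G.mulVec σstar a) ∧
      (∀ σ : Fin N → ℝ, (∀ a, κ * Real.sqrt N ≤ G.mulVec σ a) →
        eNorm (σstar - u) ≤ eNorm (σ - u)) ∧
      eNorm (σstar - u) ≤
        (1 / s) * eNorm (fun a => max (κ * Real.sqrt N - G.mulVec u a) 0) := by
  exact core G (fun _ => κ * Real.sqrt N) u s hs hG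
end
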